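/- Let U₁ → U₂ → X → (Y₁,Y₂,Y₃) be finitely-valued random variables with U₁ → U₂ → X Markov. If X → Y₁ → Y₃ is also Markov (Y₃ degraded from Y₁), then for any U₃ with U₁ → U₃ → X Markov and (U₁,U₂,U₃) → X → (Y₁,Y₃) Markov: I(U₃; Y₃) − I(U₃; Y₁ | U₁) ≤ I(U₁; Y₃). -/

import Mathlib

/-!
The channel chain `(U₁,U₂,U₃) → X → (Y₁,Y₃)` and degradedness `X → Y₁ → Y₃` combine into
`((U₁,U₂,U₃),X) → Y₁ → Y₃`; forgetting `U₂` and `X` and applying weak union gives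
`U₃ → (U₁,Y₁) → Y₃`, i.e. `I(U₃;Y₃|U₁,Y₁) = 0`. Expanding `I(U₃;Y₁,Y₃|U₁)` by the chain rule in
both orders then yields the conditional data processing inequality `I(U₃;Y₃|U₁) ≤ I(U₃;Y₁|U₁)`,
and expanding `I(U₁,U₃;Y₃)` in both orders gives `I(U₃;Y₃) ≤ I(U₁;Y₃) + I(U₃;Y₃|U₁)`.

Nonnegativity of conditional mutual information is Gibbs' inequality: writing `CMI` as the
`μ`-average of `log (p(x,y,z) p(z) / (p(x,z) p(y,z)))`, the bound `1 - t⁻¹ ≤ log t` reduces it to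
the fact that `p(x,z) p(y,z) / p(z)` has total mass one.
-/

open Real BigOperators Finset

noncomputable section

/-- Probability that a random variable `X` takes value `a`, under weight function `μ`. -/
def prob {Ω : Type*} [Fintype Ω] {A : Type*} [DecidableEq A]
    (μ : Ω → ℝ) (X : Ω → A) (a : A) : ℝ :=
  ∑ ω, if X ω = a then μ ω else 0

/-- Shannon entropy (natural log) of a finitely-valued random variable. -/
def Hent {Ω : Type*} [Fintype Ω] {A : Type*} [Fintype A] [DecidableEq A]
    (μ : Ω → ℝ) (X : Ω → A) : ℝ :=
  ∑ a, Real.negMulLog (prob μ X a)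

/-- Mutual information `I(X;Y)`. -/
def MI {Ω : Type*} [Fintype Ω] {A B : Type*} [Fintype A] [DecidableEq A]
    [Fintype B] [DecidableEq B] (μ : Ω → ℝ) (X : Ω → A) (Y : Ω → B) : ℝ :=
  Hent μ X + Hent μ Y - Hent μ (fun ω => (X ω, Y ω))

/-- Conditional mutual information `I(X;Y|Z)`. -/
def CMI {Ω : Type*} [Fintype Ω] {A B C : Type*} [Fintype A] [DecidableEq A]
    [Fintype B] [DecidableEq B] [Fintype C] [DecidableEq C]
    (μ : Ω → ℝ) (X : Ω → A) (Y : Ω → B) (Z : Ω → C) : ℝ :=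
  Hent μ (fun ω => (X ω, Z ω)) + Hent μ (fun ω => (Y ω, Z ω))
    - Hent μ (fun ω => (X ω, Y ω, Z ω)) - Hent μ Z

/-- `μ` is a probability mass function on the finite sample space `Ω`. -/
def IsProbMeasure {Ω : Type*} [Fintype Ω] (μ : Ω → ℝ) : Prop :=
  (∀ ω, 0 ≤ μ ω) ∧ ∑ ω, μ ω = 1

/-- `X → Y → Z` forms a Markov chain: `X` and `Z` are conditionally independent given `Y`. -/
def Markov {Ω : Type*} [Fintype Ω] {A B C : Type*} [DecidableEq A]
    [DecidableEq B] [DecidableEq C]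
    (μ : Ω → ℝ) (X : Ω → A) (Y : Ω → B) (Z : Ω → C) : Prop :=
  ∀ a b c, prob μ (fun ω => (X ω, Y ω, Z ω)) (a, b, c) * prob μ Y b
    = prob μ (fun ω => (X ω, Y ω)) (a, b) * prob μ (fun ω => (Y ω, Z ω)) (b, c)

end

section

variable {Ω A A' B C D : Type*} [Fintype Ω] [DecidableEq A] [DecidableEq A'] [DecidableEq B]
  [DecidableEq C] [DecidableEq D] {μ : Ω → ℝ}

section Prob

lemma prob_nonneg (hμ : ∀ ω, 0 ≤ μ ω) (X : Ω → A) (a : A) : 0 ≤ prob μ X a :=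
  sum_nonneg fun ω _ => by split_ifs <;> simp [hμ ω]

lemma prob_congr {X : Ω → A} {Y : Ω → B} {a : A} {b : B} (h : ∀ ω, X ω = a ↔ Y ω = b) :
    prob μ X a = prob μ Y b :=
  sum_congr rfl fun ω _ => if_congr (h ω) rfl rfl

lemma prob_eq_zero_of_imp (hμ : ∀ ω, 0 ≤ μ ω) {X : Ω → A} {Y : Ω → B} {a : A} {b : B}
    (h : ∀ ω, X ω = a → Y ω = b) (hb : prob μ Y b = 0) : prob μ X a = 0 := by
  refine le_antisymm (hb ▸ sum_le_sum fun ω _ => ?_) (prob_nonneg hμ X a)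
  by_cases hx : X ω = a
  · simp [hx, h ω hx]
  · simp only [hx, if_false]; split_ifs <;> simp [hμ ω]

lemma sum_prob_mul [Fintype A] (X : Ω → A) (F : A → ℝ) :
    ∑ a, prob μ X a * F a = ∑ ω, μ ω * F (X ω) := by
  simp only [prob, sum_mul, ite_mul, zero_mul]
  rw [sum_comm]
  simp

lemma sum_prob [Fintype A] (X : Ω → A) : ∑ a, prob μ X a = ∑ ω, μ ω := by
  simpa using sum_prob_mul X fun _ => 1

lemma sum_prob_eq_prob [Fintype B] {V : Ω → C} {v : B → C} {X : Ω → A} {a : A} (Y : Ω → B)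
    (h : ∀ ω b, V ω = v b ↔ X ω = a ∧ Y ω = b) : ∑ b, prob μ V (v b) = prob μ X a := by
  simp only [prob]
  rw [sum_comm]
  refine sum_congr rfl fun ω _ => ?_
  simp only [h, ite_and]
  split_ifs <;> simp

lemma prob_comp_fst_eq_sum [Fintype A] (f : A → A') (W : Ω → A) (V : Ω → B) (a' : A') (v : B) :
    prob μ (fun ω => (f (W ω), V ω)) (a', v)
      = ∑ a with f a = a', prob μ (fun ω => (W ω, V ω)) (a, v) := by
  simp only [prob]
  rw [sum_comm]
  refine sum_congr rfl fun ω _ => ?_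
  rw [sum_filter,
    sum_eq_single (W ω) (fun a _ ha => by simp [Prod.ext_iff, Ne.symm ha]) (by simp)]
  by_cases hw : f (W ω) = a' <;> simp [hw]

def probAt (μ : Ω → ℝ) (X : Ω → A) (ω : Ω) : ℝ := prob μ X (X ω)

lemma le_probAt (hμ : ∀ ω, 0 ≤ μ ω) (X : Ω → A) (ω : Ω) : μ ω ≤ probAt μ X ω := by
  have := single_le_sum (f := fun ω' => if X ω' = X ω then μ ω' else 0)
    (fun ω' _ => by split_ifs <;> simp [hμ ω']) (mem_univ ω)
  simpa [probAt, prob] using this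

end Prob

section Information

variable [Fintype A] [Fintype B] [Fintype C] [Fintype D]

lemma Hent_eq_neg_sum_log_probAt (X : Ω → A) :
    Hent μ X = -∑ ω, μ ω * log (probAt μ X ω) := by
  simp only [Hent, negMulLog, neg_mul, sum_neg_distrib, sum_prob_mul X fun a => log (prob μ X a)]
  rfl

lemma Hent_congr {X : Ω → A} {Y : Ω → B}
    (h : ∀ ω ω', X ω' = X ω ↔ Y ω' = Y ω) : Hent μ X = Hent μ Y := by
  simp only [Hent_eq_neg_sum_log_probAt, probAt, prob_congr (h _)]

lemma MI_add_CMI_comm (X : Ω → A) (Y : Ω → B) (Z : Ω → C) :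
    MI μ X Z + CMI μ Y Z X = MI μ Y Z + CMI μ X Z Y := by
  have hXY : Hent μ (fun ω => (X ω, Y ω)) = Hent μ (fun ω => (Y ω, X ω)) :=
    Hent_congr fun _ _ => by simp only [Prod.mk.injEq]; tauto
  have hXZ : Hent μ (fun ω => (X ω, Z ω)) = Hent μ (fun ω => (Z ω, X ω)) :=
    Hent_congr fun _ _ => by simp only [Prod.mk.injEq]; tauto
  have hYZ : Hent μ (fun ω => (Y ω, Z ω)) = Hent μ (fun ω => (Z ω, Y ω)) :=
    Hent_congr fun _ _ => by simp only [Prod.mk.injEq]; tauto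
  have hXYZ : Hent μ (fun ω => (X ω, Z ω, Y ω)) = Hent μ (fun ω => (Y ω, Z ω, X ω)) :=
    Hent_congr fun _ _ => by simp only [Prod.mk.injEq]; tauto
  simp only [MI, CMI]
  linarith

lemma CMI_add_CMI_comm (X : Ω → A) (Y : Ω → B) (Z : Ω → C) (W : Ω → D) :
    CMI μ X Y W + CMI μ X Z (fun ω => (W ω, Y ω))
      = CMI μ X Z W + CMI μ X Y (fun ω => (W ω, Z ω)) := by
  have hYW : Hent μ (fun ω => (Y ω, W ω)) = Hent μ (fun ω => (W ω, Y ω)) :=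
    Hent_congr fun _ _ => by simp only [Prod.mk.injEq]; tauto
  have hZW : Hent μ (fun ω => (Z ω, W ω)) = Hent μ (fun ω => (W ω, Z ω)) :=
    Hent_congr fun _ _ => by simp only [Prod.mk.injEq]; tauto
  have hXYW : Hent μ (fun ω => (X ω, Y ω, W ω)) = Hent μ (fun ω => (X ω, W ω, Y ω)) :=
    Hent_congr fun _ _ => by simp only [Prod.mk.injEq]; tauto
  have hXZW : Hent μ (fun ω => (X ω, Z ω, W ω)) = Hent μ (fun ω => (X ω, W ω, Z ω)) :=
    Hent_congr fun _ _ => by simp only [Prod.mk.injEq]; tauto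
  have hYZW : Hent μ (fun ω => (Z ω, W ω, Y ω)) = Hent μ (fun ω => (Y ω, W ω, Z ω)) :=
    Hent_congr fun _ _ => by simp only [Prod.mk.injEq]; tauto
  have hXYZW :
      Hent μ (fun ω => (X ω, Z ω, W ω, Y ω)) = Hent μ (fun ω => (X ω, Y ω, W ω, Z ω)) :=
    Hent_congr fun _ _ => by simp only [Prod.mk.injEq]; tauto
  simp only [CMI]
  linarith

lemma CMI_eq_sum_log_probAt (X : Ω → A) (Y : Ω → B) (Z : Ω → C) :
    CMI μ X Y Z = ∑ ω, μ ω * (log (probAt μ (fun ω => (X ω, Y ω, Z ω)) ω)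
      + log (probAt μ Z ω) - log (probAt μ (fun ω => (X ω, Z ω)) ω)
      - log (probAt μ (fun ω => (Y ω, Z ω)) ω)) := by
  simp only [CMI, Hent_eq_neg_sum_log_probAt, mul_add, mul_sub, sum_add_distrib, sum_sub_distrib]
  ring

lemma sum_prob_mul_prob_div_prob (X : Ω → A) (Y : Ω → B) (Z : Ω → C) :
    ∑ a, ∑ b, ∑ c, prob μ (fun ω => (X ω, Z ω)) (a, c) * prob μ (fun ω => (Y ω, Z ω)) (b, c)
      / prob μ Z c = ∑ ω, μ ω := by
  have hX : ∀ c, ∑ a, prob μ (fun ω => (X ω, Z ω)) (a, c) = prob μ Z c := fun c =>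
    sum_prob_eq_prob X fun _ _ => by simp only [Prod.mk.injEq]; tauto
  have hY : ∀ c, ∑ b, prob μ (fun ω => (Y ω, Z ω)) (b, c) = prob μ Z c := fun c =>
    sum_prob_eq_prob Y fun _ _ => by simp only [Prod.mk.injEq]; tauto
  calc ∑ a, ∑ b, ∑ c, prob μ (fun ω => (X ω, Z ω)) (a, c) * prob μ (fun ω => (Y ω, Z ω)) (b, c)
        / prob μ Z c
      = ∑ c, ∑ a, ∑ b, prob μ (fun ω => (X ω, Z ω)) (a, c)
          * prob μ (fun ω => (Y ω, Z ω)) (b, c) / prob μ Z c :=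
        (sum_congr rfl fun _ _ => sum_comm).trans sum_comm
    _ = ∑ c, (∑ a, prob μ (fun ω => (X ω, Z ω)) (a, c))
          * (∑ b, prob μ (fun ω => (Y ω, Z ω)) (b, c)) / prob μ Z c := by
        refine sum_congr rfl fun c _ => ?_
        rw [sum_mul, sum_div]
        exact sum_congr rfl fun a _ => by rw [mul_sum, sum_div]
    _ = ∑ c, prob μ Z c := by simp only [hX, hY, mul_self_div_self]
    _ = ∑ ω, μ ω := sum_prob Z

lemma CMI_nonneg (hμ : IsProbMeasure μ) (X : Ω → A) (Y : Ω → B) (Z : Ω → C) :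
    0 ≤ CMI μ X Y Z := by
  obtain ⟨hμ, hμ_one⟩ := hμ
  set V := fun ω => (X ω, Y ω, Z ω)
  -- the distribution making `X` and `Y` conditionally independent given `Z`
  set q : A × B × C → ℝ := fun v => prob μ (fun ω => (X ω, Z ω)) (v.1, v.2.2)
    * prob μ (fun ω => (Y ω, Z ω)) (v.2.1, v.2.2) / prob μ Z v.2.2
  have hq : ∑ ω, μ ω * (q (V ω) / probAt μ V ω) ≤ 1 := calc
    _ = ∑ v, prob μ V v * (q v / prob μ V v) := (sum_prob_mul V _).symm
    _ ≤ ∑ v, q v := sum_le_sum fun v _ => by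
        rcases eq_or_ne (prob μ V v) 0 with h | h
        · rw [h, zero_mul]
          exact div_nonneg (mul_nonneg (prob_nonneg hμ _ _) (prob_nonneg hμ _ _))
            (prob_nonneg hμ _ _)
        · rw [mul_div_cancel₀ _ h]
    _ = 1 := by simp only [Fintype.sum_prod_type, q, sum_prob_mul_prob_div_prob, hμ_one]
  have hlog : ∀ ω, μ ω * (1 - q (V ω) / probAt μ V ω) ≤ μ ω * (log (probAt μ V ω)
      + log (probAt μ Z ω) - log (probAt μ (fun ω => (X ω, Z ω)) ω)
      - log (probAt μ (fun ω => (Y ω, Z ω)) ω)) := by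
    intro ω
    rcases (hμ ω).eq_or_lt with h | h
    · simp [← h]
    have hV := h.trans_le (le_probAt hμ V ω)
    have hZ := h.trans_le (le_probAt hμ Z ω)
    have hXZ := h.trans_le (le_probAt hμ (fun ω => (X ω, Z ω)) ω)
    have hYZ := h.trans_le (le_probAt hμ (fun ω => (Y ω, Z ω)) ω)
    have key := one_sub_inv_le_log_of_pos (div_pos (mul_pos hV hZ) (mul_pos hXZ hYZ))
    rw [inv_div, log_div (by positivity) (by positivity), log_mul hV.ne' hZ.ne',
      log_mul hXZ.ne' hYZ.ne'] at key
    refine mul_le_mul_of_nonneg_left ?_ h.le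
    calc 1 - q (V ω) / probAt μ V ω
        = 1 - probAt μ (fun ω => (X ω, Z ω)) ω * probAt μ (fun ω => (Y ω, Z ω)) ω
          / (probAt μ V ω * probAt μ Z ω) := by rw [mul_comm (probAt μ V ω), ← div_div]; rfl
      _ ≤ _ := by linarith
  rw [CMI_eq_sum_log_probAt]
  calc 0 ≤ ∑ ω, μ ω - ∑ ω, μ ω * (q (V ω) / probAt μ V ω) := by linarith
    _ = ∑ ω, μ ω * (1 - q (V ω) / probAt μ V ω) := by
        simp only [mul_sub, mul_one, sum_sub_distrib]
    _ ≤ _ := sum_le_sum fun ω _ => hlog ω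

lemma MI_le_MI_add_CMI (hμ : IsProbMeasure μ) (X : Ω → A) (Y : Ω → B) (Z : Ω → C) :
    MI μ Y Z ≤ MI μ X Z + CMI μ Y Z X := by
  linarith [MI_add_CMI_comm (μ := μ) X Y Z, CMI_nonneg hμ X Z Y]

end Information

section Markov

lemma Markov.comp_left [Fintype A] {W : Ω → A} {X : Ω → B} {Z : Ω → C} (h : Markov μ W X Z)
    (f : A → A') : Markov μ (fun ω => f (W ω)) X Z := by
  intro a' x z
  rw [prob_comp_fst_eq_sum f W (fun ω => (X ω, Z ω)), prob_comp_fst_eq_sum f W X, sum_mul, sum_mul]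
  exact sum_congr rfl fun a _ => h a x z

lemma Markov.pair_left [Fintype D] (hμ : ∀ ω, 0 ≤ μ ω)
    {W : Ω → A} {X : Ω → B} {Y : Ω → C} {Z : Ω → D}
    (h₁ : Markov μ W X (fun ω => (Y ω, Z ω))) (h₂ : Markov μ X Y Z) :
    Markov μ (fun ω => (W ω, X ω)) Y Z := by
  rintro ⟨w, x⟩ y z
  have h₁' : prob μ (fun ω => (W ω, X ω, Y ω)) (w, x, y) * prob μ X x
      = prob μ (fun ω => (W ω, X ω)) (w, x) * prob μ (fun ω => (X ω, Y ω)) (x, y) := by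
    have hWXY : ∑ z, prob μ (fun ω => (W ω, X ω, Y ω, Z ω)) (w, x, y, z)
        = prob μ (fun ω => (W ω, X ω, Y ω)) (w, x, y) :=
      sum_prob_eq_prob Z fun _ _ => by simp only [Prod.mk.injEq]; tauto
    have hXY : ∑ z, prob μ (fun ω => (X ω, Y ω, Z ω)) (x, y, z)
        = prob μ (fun ω => (X ω, Y ω)) (x, y) :=
      sum_prob_eq_prob Z fun _ _ => by simp only [Prod.mk.injEq]; tauto
    rw [← hWXY, ← hXY, sum_mul, mul_sum]
    exact sum_congr rfl fun z _ => h₁ w x (y, z)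
  have e₄ : prob μ (fun ω => ((W ω, X ω), Y ω, Z ω)) ((w, x), y, z)
      = prob μ (fun ω => (W ω, X ω, Y ω, Z ω)) (w, x, y, z) :=
    prob_congr fun _ => by simp only [Prod.mk.injEq, and_assoc]
  have e₃ : prob μ (fun ω => ((W ω, X ω), Y ω)) ((w, x), y)
      = prob μ (fun ω => (W ω, X ω, Y ω)) (w, x, y) :=
    prob_congr fun _ => by simp only [Prod.mk.injEq, and_assoc]
  rw [e₄, e₃]
  rcases eq_or_ne (prob μ X x) 0 with hx | hx
  · have h₄ : prob μ (fun ω => (W ω, X ω, Y ω, Z ω)) (w, x, y, z) = 0 :=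
      prob_eq_zero_of_imp hμ (fun _ h => congrArg (·.2.1) h) hx
    have h₃ : prob μ (fun ω => (W ω, X ω, Y ω)) (w, x, y) = 0 :=
      prob_eq_zero_of_imp hμ (fun _ h => congrArg (·.2.1) h) hx
    rw [h₄, h₃, zero_mul, zero_mul]
  · refine mul_right_cancel₀ hx ?_
    linear_combination prob μ Y y * h₁ w x (y, z)
      + prob μ (fun ω => (W ω, X ω)) (w, x) * h₂ x y z
      - prob μ (fun ω => (Y ω, Z ω)) (y, z) * h₁'

lemma Markov.weak_union [Fintype B] (hμ : ∀ ω, 0 ≤ μ ω)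
    {W : Ω → A} {V : Ω → B} {Y : Ω → C} {Z : Ω → D}
    (h : Markov μ (fun ω => (W ω, V ω)) Y Z) : Markov μ V (fun ω => (W ω, Y ω)) Z := by
  rintro v ⟨w, y⟩ z
  have hm : prob μ (fun ω => (W ω, Y ω, Z ω)) (w, y, z) * prob μ Y y
      = prob μ (fun ω => (W ω, Y ω)) (w, y) * prob μ (fun ω => (Y ω, Z ω)) (y, z) := by
    have hWYZ : ∑ v, prob μ (fun ω => ((W ω, V ω), Y ω, Z ω)) ((w, v), y, z)
        = prob μ (fun ω => (W ω, Y ω, Z ω)) (w, y, z) :=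
      sum_prob_eq_prob V fun _ _ => by simp only [Prod.mk.injEq]; tauto
    have hWY : ∑ v, prob μ (fun ω => ((W ω, V ω), Y ω)) ((w, v), y)
        = prob μ (fun ω => (W ω, Y ω)) (w, y) :=
      sum_prob_eq_prob V fun _ _ => by simp only [Prod.mk.injEq]; tauto
    rw [← hWYZ, ← hWY, sum_mul, sum_mul]
    exact sum_congr rfl fun v _ => h (w, v) y z
  have e₄ : prob μ (fun ω => (V ω, (W ω, Y ω), Z ω)) (v, (w, y), z)
      = prob μ (fun ω => ((W ω, V ω), Y ω, Z ω)) ((w, v), y, z) :=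
    prob_congr fun _ => by simp only [Prod.mk.injEq]; tauto
  have e₃ : prob μ (fun ω => (V ω, W ω, Y ω)) (v, w, y)
      = prob μ (fun ω => ((W ω, V ω), Y ω)) ((w, v), y) :=
    prob_congr fun _ => by simp only [Prod.mk.injEq]; tauto
  have e₃' : prob μ (fun ω => ((W ω, Y ω), Z ω)) ((w, y), z)
      = prob μ (fun ω => (W ω, Y ω, Z ω)) (w, y, z) :=
    prob_congr fun _ => by simp only [Prod.mk.injEq, and_assoc]
  rw [e₄, e₃, e₃']
  rcases eq_or_ne (prob μ Y y) 0 with hy | hy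
  · have h₂ : prob μ (fun ω => (W ω, Y ω)) (w, y) = 0 :=
      prob_eq_zero_of_imp hμ (fun _ h => congrArg (·.2) h) hy
    have h₃ : prob μ (fun ω => (W ω, Y ω, Z ω)) (w, y, z) = 0 :=
      prob_eq_zero_of_imp hμ (fun _ h => congrArg (·.2.1) h) hy
    rw [h₂, h₃, mul_zero, mul_zero]
  · refine mul_right_cancel₀ hy ?_
    linear_combination prob μ (fun ω => (W ω, Y ω)) (w, y) * h (w, v) y z
      - prob μ (fun ω => ((W ω, V ω), Y ω)) ((w, v), y) * hm

lemma CMI_eq_zero_of_markov [Fintype A] [Fintype B] [Fintype C] (hμ : ∀ ω, 0 ≤ μ ω)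
    {X : Ω → A} {Y : Ω → B} {Z : Ω → C} (h : Markov μ X Z Y) : CMI μ X Y Z = 0 := by
  rw [CMI_eq_sum_log_probAt]
  refine sum_eq_zero fun ω _ => ?_
  rcases (hμ ω).eq_or_lt with h0 | h0
  · simp [← h0]
  have hXYZ := h0.trans_le (le_probAt hμ (fun ω => (X ω, Y ω, Z ω)) ω)
  have hZ := h0.trans_le (le_probAt hμ Z ω)
  have hXZ := h0.trans_le (le_probAt hμ (fun ω => (X ω, Z ω)) ω)
  have hYZ := h0.trans_le (le_probAt hμ (fun ω => (Y ω, Z ω)) ω)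
  have hfac : probAt μ (fun ω => (X ω, Y ω, Z ω)) ω * probAt μ Z ω
      = probAt μ (fun ω => (X ω, Z ω)) ω * probAt μ (fun ω => (Y ω, Z ω)) ω := by
    have e₃ : prob μ (fun ω => (X ω, Z ω, Y ω)) (X ω, Z ω, Y ω)
        = probAt μ (fun ω => (X ω, Y ω, Z ω)) ω :=
      prob_congr fun _ => by simp only [Prod.mk.injEq]; tauto
    have e₂ : prob μ (fun ω => (Z ω, Y ω)) (Z ω, Y ω) = probAt μ (fun ω => (Y ω, Z ω)) ω :=
      prob_congr fun _ => by simp only [Prod.mk.injEq]; tauto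
    have := h (X ω) (Z ω) (Y ω)
    rwa [e₃, e₂] at this
  rw [← log_mul hXYZ.ne' hZ.ne', hfac, log_mul hXZ.ne' hYZ.ne']
  ring

lemma CMI_le_of_markov [Fintype A] [Fintype B] [Fintype C] [Fintype D] (hμ : IsProbMeasure μ)
    {X : Ω → A} {Y : Ω → B} {Z : Ω → C} {W : Ω → D} (h : Markov μ X (fun ω => (W ω, Y ω)) Z) :
    CMI μ X Z W ≤ CMI μ X Y W := by
  linarith [CMI_add_CMI_comm (μ := μ) X Y Z W, CMI_nonneg hμ X Y (fun ω => (W ω, Z ω)),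
    CMI_eq_zero_of_markov hμ.1 h]

end Markov

end

theorem degraded_converse_bound_general {Ω : Type*} [Fintype Ω]
    {𝒰₁ 𝒰₂ 𝒰₃ 𝒳 𝒴₁ 𝒴₃ : Type*}
    [Fintype 𝒰₁] [DecidableEq 𝒰₁] [Fintype 𝒰₂] [DecidableEq 𝒰₂]
    [Fintype 𝒰₃] [DecidableEq 𝒰₃] [Fintype 𝒳] [DecidableEq 𝒳]
    [Fintype 𝒴₁] [DecidableEq 𝒴₁] [Fintype 𝒴₃] [DecidableEq 𝒴₃]
    (μ : Ω → ℝ) (hμ : IsProbMeasure μ)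
    (U₁ : Ω → 𝒰₁) (U₂ : Ω → 𝒰₂) (U₃ : Ω → 𝒰₃) (X : Ω → 𝒳)
    (Y₁ : Ω → 𝒴₁) (Y₃ : Ω → 𝒴₃)
    (hCh : Markov μ (fun ω => (U₁ ω, U₂ ω, U₃ ω)) X (fun ω => (Y₁ ω, Y₃ ω)))
    (hDeg : Markov μ X Y₁ Y₃) :
    MI μ U₃ Y₃ - CMI μ U₃ Y₁ U₁ ≤ MI μ U₁ Y₃ := by
  have hU : Markov μ (fun ω => (U₁ ω, U₃ ω)) Y₁ Y₃ :=
    (hCh.pair_left hμ.1 hDeg).comp_left fun t => (t.1.1, t.1.2.2)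
  have hY : Markov μ U₃ (fun ω => (U₁ ω, Y₁ ω)) Y₃ := hU.weak_union hμ.1
  linarith [MI_le_MI_add_CMI hμ U₁ U₃ Y₃, CMI_le_of_markov hμ hY]

/-- Converse inequality for the degraded receiver: if `U₁ → U₂ → X`,
`U₁ → U₃ → X`, `(U₁,U₂,U₃) → X → (Y₁,Y₃)` and `X → Y₁ → Y₃` are Markov, then
`I(U₃;Y₃) − I(U₃;Y₁|U₁) ≤ I(U₁;Y₃)`. -/
theorem degraded_converse_bound {Ω : Type*} [Fintype Ω]
    {𝒰₁ 𝒰₂ 𝒰₃ 𝒳 𝒴₁ 𝒴₃ : Type*}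
    [Fintype 𝒰₁] [DecidableEq 𝒰₁] [Fintype 𝒰₂] [DecidableEq 𝒰₂]
    [Fintype 𝒰₃] [DecidableEq 𝒰₃] [Fintype 𝒳] [DecidableEq 𝒳]
    [Fintype 𝒴₁] [DecidableEq 𝒴₁] [Fintype 𝒴₃] [DecidableEq 𝒴₃]
    (μ : Ω → ℝ) (hμ : IsProbMeasure μ)
    (U₁ : Ω → 𝒰₁) (U₂ : Ω → 𝒰₂) (U₃ : Ω → 𝒰₃) (X : Ω → 𝒳)
    (Y₁ : Ω → 𝒴₁) (Y₃ : Ω → 𝒴₃)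
    (h₁₂ : Markov μ U₁ U₂ X)
    (h₁₃ : Markov μ U₁ U₃ X)
    (hCh : Markov μ (fun ω => (U₁ ω, U₂ ω, U₃ ω)) X (fun ω => (Y₁ ω, Y₃ ω)))
    (hDeg : Markov μ X Y₁ Y₃) :
    MI μ U₃ Y₃ - CMI μ U₃ Y₁ U₁ ≤ MI μ U₁ Y₃ :=
  degraded_converse_bound_general μ hμ U₁ U₂ U₃ X Y₁ Y₃ hCh hDeg
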